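/- In the setup (G centerless, f, h : G → Aut(G) with h(σ) = conj(g(σ))∘f(σ), g a bijection satisfying g(στ) = g(σ)·f(σ)(g(τ)), and N = {ρ(g(σ))∘f(σ) : σ ∈ G} a normal subgroup of Hol(G)), the map σ ↦ g(σ)·g(ker(h)) is a surjective group homomorphism from G to G/g(ker(h)), and the map σ ↦ g(σ)⁻¹·g(ker(f)) is a surjective group homomorphism from G to G/g(ker(f)) (i.e., g induces a surjective anti-homomorphism from G to G/g(ker(f))). Here g(ker(f)) and g(ker(h)) are normal (indeed characteristic) subgroups of G. -/

import Mathlib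

/-- The left regular representation `λ : G →* Perm G`, `λ(σ)(x) = σ·x`. -/
def lambda (G : Type*) [Group G] : G →* Equiv.Perm G where
  toFun σ := Equiv.mulLeft σ
  map_one' := by ext x; simp
  map_mul' σ τ := by ext x; simp [mul_assoc]

/-- The right regular representation `ρ : G →* Perm G`, `ρ(σ)(x) = x·σ⁻¹`. -/
def rho (G : Type*) [Group G] : G →* Equiv.Perm G where
  toFun σ := Equiv.mulRight σ⁻¹
  map_one' := by ext x; simp
  map_mul' σ τ := by ext x; simp [mul_assoc]

/-- The holomorph `Hol(G)`: the normalizer of `λ(G)` in `Perm G`. -/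
def Hol (G : Type*) [Group G] : Subgroup (Equiv.Perm G) :=
  Subgroup.normalizer (((lambda G).range : Subgroup (Equiv.Perm G)) : Set (Equiv.Perm G))

/-!
Conjugating `ρ(g σ)·f σ ∈ N` by `λ(f σ x)` and by `ρ(h σ x)`, both of which lie in `Hol G`, and
reading off the two components of the result gives some `τ` with `σ⁻¹τ ∈ ker h`, resp. `σ⁻¹τ ∈ ker f`,
and `g (σ⁻¹τ) = f σ x · x⁻¹`, resp. `g (σ⁻¹τ) = x · (h σ x)⁻¹`. Hence every `f σ` acts trivially
on `G ⧸ g(ker h)` and every `h σ` acts trivially on `G ⧸ g(ker f)`. Since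
`g (στ) = g σ · f σ (g τ)` and `(g (στ))⁻¹ = (g σ)⁻¹ · h σ ((g τ)⁻¹)`, the maps `σ ↦ g σ` and
`σ ↦ (g σ)⁻¹` become homomorphisms modulo these subgroups.
-/

section

open Function

variable {G : Type*} [Group G]

@[simp] lemma MulAut.toPerm_apply (F : MulAut G) (x : G) : MulAut.toPerm G F x = F x := rfl

@[simp] lemma lambda_apply (a x : G) : lambda G a x = a * x := rfl

@[simp] lemma rho_apply (a x : G) : rho G a x = x * a⁻¹ := rfl

lemma lambda_mem_Hol (a : G) : lambda G a ∈ Hol G :=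
  Subgroup.le_normalizer (H := (lambda G).range) ⟨a, rfl⟩

lemma rho_commute_lambda (a b : G) : Commute (rho G a) (lambda G b) := by
  ext x
  simp [mul_assoc]

lemma rho_mem_Hol (a : G) : rho G a ∈ Hol G := by
  rw [Hol, Subgroup.mem_normalizer_iff]
  intro p
  constructor
  · rintro ⟨b, rfl⟩
    exact ⟨b, by rw [(rho_commute_lambda a b).eq, mul_inv_cancel_right]⟩
  · rintro ⟨b, hb⟩
    refine ⟨b, ?_⟩
    rw [eq_mul_inv_iff_mul_eq, ← (rho_commute_lambda a b).eq] at hb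
    exact mul_left_cancel hb

lemma rho_mul_toPerm_inj {b c : G} {F F' : MulAut G} :
    rho G b * MulAut.toPerm G F = rho G c * MulAut.toPerm G F' ↔ b = c ∧ F = F' := by
  refine ⟨fun hEq => ?_, fun ⟨hb, hF⟩ => hb ▸ hF ▸ rfl⟩
  have happly (x : G) : F x * b⁻¹ = F' x * c⁻¹ := Equiv.congr_fun hEq x
  have hbc : b = c := by simpa using happly 1
  subst hbc
  exact ⟨rfl, MulEquiv.ext fun x => mul_right_cancel (happly x)⟩

lemma lambda_conj_rho_mul_toPerm (a b : G) (F : MulAut G) :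
    lambda G a * (rho G b * MulAut.toPerm G F) * (lambda G a)⁻¹
      = rho G (b * F a * a⁻¹) * MulAut.toPerm G (MulAut.conj (a * (F a)⁻¹) * F) := by
  rw [mul_inv_eq_iff_eq_mul]
  ext x
  simp only [Equiv.Perm.mul_apply, lambda_apply, rho_apply, MulAut.toPerm_apply, MulAut.mul_apply,
    MulAut.conj_apply, MulEquiv.map_mul]
  group

lemma rho_conj_rho_mul_toPerm (a b : G) (F : MulAut G) :
    rho G a * (rho G b * MulAut.toPerm G F) * (rho G a)⁻¹
      = rho G (a * b * (F a)⁻¹) * MulAut.toPerm G F := by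
  rw [mul_inv_eq_iff_eq_mul]
  ext x
  simp only [Equiv.Perm.mul_apply, rho_apply, MulAut.toPerm_apply, MulEquiv.map_mul,
    MulEquiv.map_inv]
  group

lemma exists_conj_eq_rho_mul_toPerm {f : G → MulAut G} {g : G → G} {N : Subgroup (Equiv.Perm G)}
    (hN : (N : Set (Equiv.Perm G))
      = {q | ∃ σ : G, q = rho G (g σ) * MulAut.toPerm G (f σ)})
    (hNnorm : ∀ x ∈ Hol G, ∀ n ∈ N, x * n * x⁻¹ ∈ N) {p : Equiv.Perm G} (hp : p ∈ Hol G)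
    (σ : G) :
    ∃ τ, p * (rho G (g σ) * MulAut.toPerm G (f σ)) * p⁻¹
      = rho G (g τ) * MulAut.toPerm G (f τ) := by
  have hmem : rho G (g σ) * MulAut.toPerm G (f σ) ∈ N := by
    rw [← SetLike.mem_coe, hN]
    exact ⟨σ, rfl⟩
  have hconj := hNnorm p hp _ hmem
  rw [← SetLike.mem_coe, hN] at hconj
  exact hconj

section Cocycle

variable {f : G →* MulAut G} {g : G → G}

lemma apply_inv_mul_of_cocycle (hg1 : g 1 = 1)
    (hrel : ∀ σ τ : G, g (σ * τ) = g σ * (f σ) (g τ)) (σ τ : G) :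
    g (σ⁻¹ * τ) = (f σ)⁻¹ ((g σ)⁻¹ * g τ) := by
  have hinv : f σ (g σ⁻¹) = (g σ)⁻¹ := by
    have h1 := hrel σ σ⁻¹
    rw [mul_inv_cancel, hg1] at h1
    exact eq_inv_of_mul_eq_one_right h1.symm
  rw [hrel, map_inv, map_mul, ← hinv, MulAut.inv_apply_self]

lemma inv_apply_mul_of_cocycle {h : G →* MulAut G}
    (hrel : ∀ σ τ : G, g (σ * τ) = g σ * (f σ) (g τ))
    (hh : ∀ σ : G, h σ = MulAut.conj (g σ) * f σ) (σ τ : G) :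
    (g (σ * τ))⁻¹ = (g σ)⁻¹ * h σ (g τ)⁻¹ := by
  rw [hrel, hh, MulAut.mul_apply, MulAut.conj_apply, map_inv]
  group

variable {h : G →* MulAut G} {N : Subgroup (Equiv.Perm G)}

lemma mk_f_apply (hg1 : g 1 = 1) (hrel : ∀ σ τ : G, g (σ * τ) = g σ * (f σ) (g τ))
    (hh : ∀ σ : G, h σ = MulAut.conj (g σ) * f σ)
    (hN : (N : Set (Equiv.Perm G))
      = {q | ∃ σ : G, q = rho G (g σ) * MulAut.toPerm G (f σ)})
    (hNnorm : ∀ x ∈ Hol G, ∀ n ∈ N, x * n * x⁻¹ ∈ N)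
    (Kh : Subgroup G) [Kh.Normal] (hKh : (Kh : Set G) = g '' (h.ker : Set G)) (σ x : G) :
    ((f σ x : G) : G ⧸ Kh) = x := by
  set a := f σ x
  obtain ⟨τ, hτ⟩ := exists_conj_eq_rho_mul_toPerm hN hNnorm (lambda_mem_Hol a) σ
  rw [lambda_conj_rho_mul_toPerm, rho_mul_toPerm_inj] at hτ
  obtain ⟨hgτ, hfτ⟩ := hτ
  have hhτ : h τ = h σ := by
    rw [hh, hh, ← hgτ, ← hfτ, ← mul_assoc, ← map_mul]
    congr 2
    group
  have hker : σ⁻¹ * τ ∈ h.ker := by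
    rw [MonoidHom.mem_ker, map_mul, map_inv, hhτ, inv_mul_cancel]
  have hg : g (σ⁻¹ * τ) = a * x⁻¹ := by
    rw [apply_inv_mul_of_cocycle hg1 hrel, ← hgτ, mul_assoc, inv_mul_cancel_left, map_mul,
      map_inv, MulAut.inv_apply_self, MulAut.inv_apply_self]
  rw [QuotientGroup.eq_iff_div_mem, div_eq_mul_inv, ← SetLike.mem_coe, hKh, ← hg]
  exact Set.mem_image_of_mem g hker

lemma mk_h_apply (hg1 : g 1 = 1) (hrel : ∀ σ τ : G, g (σ * τ) = g σ * (f σ) (g τ))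
    (hh : ∀ σ : G, h σ = MulAut.conj (g σ) * f σ)
    (hN : (N : Set (Equiv.Perm G))
      = {q | ∃ σ : G, q = rho G (g σ) * MulAut.toPerm G (f σ)})
    (hNnorm : ∀ x ∈ Hol G, ∀ n ∈ N, x * n * x⁻¹ ∈ N)
    (Kf : Subgroup G) [Kf.Normal] (hKf : (Kf : Set G) = g '' (f.ker : Set G)) (σ x : G) :
    ((h σ x : G) : G ⧸ Kf) = x := by
  set a := h σ x
  obtain ⟨τ, hτ⟩ := exists_conj_eq_rho_mul_toPerm hN hNnorm (rho_mem_Hol a) σ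
  rw [rho_conj_rho_mul_toPerm, rho_mul_toPerm_inj] at hτ
  obtain ⟨hgτ, hfτ⟩ := hτ
  have hker : σ⁻¹ * τ ∈ f.ker := by
    rw [MonoidHom.mem_ker, map_mul, map_inv, ← hfτ, inv_mul_cancel]
  have ha : (g σ)⁻¹ * a * g σ = f σ x := by
    simp only [a, hh, MulAut.mul_apply, MulAut.conj_apply]
    group
  have hg : g (σ⁻¹ * τ) = x * a⁻¹ := by
    rw [apply_inv_mul_of_cocycle hg1 hrel, ← hgτ, ← mul_assoc, ← mul_assoc, ha, map_mul,
      map_inv, MulAut.inv_apply_self, MulAut.inv_apply_self]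
  rw [eq_comm, QuotientGroup.eq_iff_div_mem, div_eq_mul_inv, ← SetLike.mem_coe, hKf, ← hg]
  exact Set.mem_image_of_mem g hker

end Cocycle

lemma exists_surjective_monoidHom_mk_of_twisted_mul (K : Subgroup G) [K.Normal] {q : G → G}
    (hq : Surjective q) (F : G → G → G) (hmul : ∀ σ τ, q (σ * τ) = q σ * F σ (q τ))
    (hF : ∀ σ x, (F σ x : G ⧸ K) = x) :
    ∃ φ : G →* G ⧸ K, Surjective φ ∧ ∀ σ, φ σ = q σ :=
  ⟨MonoidHom.mk' (fun σ => (q σ : G ⧸ K)) fun σ τ => by rw [hmul, QuotientGroup.mk_mul, hF],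
    QuotientGroup.mk_surjective.comp hq, fun _ => rfl⟩

end

theorem g_induces_hom_and_antihom_general
    (G : Type*) [Group G]
    (f h : G →* MulAut G) (g : Equiv.Perm G) (hg1 : g 1 = 1)
    (hrel : ∀ σ τ : G, g (σ * τ) = g σ * (f σ) (g τ))
    (hh : ∀ σ : G, h σ = MulAut.conj (g σ) * f σ)
    (N : Subgroup (Equiv.Perm G))
    (hN : (N : Set (Equiv.Perm G))
      = {q | ∃ σ : G, q = rho G (g σ) * MulAut.toPerm G (f σ)})
    (hNnorm : ∀ x ∈ Hol G, ∀ n ∈ N, x * n * x⁻¹ ∈ N)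
    (Kf Kh : Subgroup G) [Kf.Normal] [Kh.Normal]
    (hKf : (Kf : Set G) = ⇑g '' (f.ker : Set G))
    (hKh : (Kh : Set G) = ⇑g '' (h.ker : Set G))
    :
    (∃ φ : G →* G ⧸ Kh, Function.Surjective φ ∧
        ∀ σ : G, φ σ = QuotientGroup.mk (g σ)) ∧
      (∃ ψ : G →* G ⧸ Kf, Function.Surjective ψ ∧
        ∀ σ : G, ψ σ = QuotientGroup.mk ((g σ)⁻¹ : G)) :=
  ⟨exists_surjective_monoidHom_mk_of_twisted_mul Kh g.surjective (fun σ => f σ) hrel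
      (mk_f_apply hg1 hrel hh hN hNnorm Kh hKh),
    exists_surjective_monoidHom_mk_of_twisted_mul Kf (inv_surjective.comp g.surjective)
      (fun σ => h σ) (inv_apply_mul_of_cocycle hrel hh) (mk_h_apply hg1 hrel hh hN hNnorm Kf hKf)⟩

/-- In the setup, with `Kf = g(ker f)` and `Kh = g(ker h)` (which are
normal, indeed characteristic, subgroups of `G`), the map `σ ↦ g(σ)·Kh` is a
surjective group homomorphism `G → G/Kh`, and the map `σ ↦ g(σ)⁻¹·Kf` is a
surjective group homomorphism `G → G/Kf` (i.e. `g` induces a surjective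
anti-homomorphism `G → G/Kf`). -/
theorem g_induces_hom_and_antihom
    (G : Type*) [Group G] (hZ : Subgroup.center G = ⊥)
    (f h : G →* MulAut G) (g : Equiv.Perm G) (hg1 : g 1 = 1)
    (hrel : ∀ σ τ : G, g (σ * τ) = g σ * (f σ) (g τ))
    (hh : ∀ σ : G, h σ = MulAut.conj (g σ) * f σ)
    (N : Subgroup (Equiv.Perm G))
    (hN : (N : Set (Equiv.Perm G))
      = {q | ∃ σ : G, q = rho G (g σ) * MulAut.toPerm G (f σ)})
    (hNle : N ≤ Hol G)
    (hNnorm : ∀ x ∈ Hol G, ∀ n ∈ N, x * n * x⁻¹ ∈ N)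
    (Kf Kh : Subgroup G) [Kf.Normal] [Kh.Normal]
    (hKf : (Kf : Set G) = ⇑g '' (f.ker : Set G))
    (hKh : (Kh : Set G) = ⇑g '' (h.ker : Set G))
    :
    (∃ φ : G →* G ⧸ Kh, Function.Surjective φ ∧
        ∀ σ : G, φ σ = QuotientGroup.mk (g σ)) ∧
      (∃ ψ : G →* G ⧸ Kf, Function.Surjective ψ ∧
        ∀ σ : G, ψ σ = QuotientGroup.mk ((g σ)⁻¹ : G)) :=
  g_induces_hom_and_antihom_general G f h g hg1 hrel hh N hN hNnorm Kf Kh hKf hKh
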